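/- Let f ∈ C_{0,2}(G₀) and let (μ,H) be a pair with H a nonzero element of the closure of C⁺(a) and ρ_μ an irreducible unitary representation of K_H of dimension d_μ. Then π_{(μ,H)}(f) is a Hilbert–Schmidt operator on H_{(μ,H)} and ‖π_{(μ,H)}(f)‖²_{HS} ≤ d_μ ‖f̂²‖²_∞. -/

import Mathlib

/-!
For fixed `h` and an orthonormal basis `(v_α)` of `V`, the coefficient `⟪v_α, (Tξ)(h)⟫` is the
`L²`-pairing of `ξ` with `k ↦ f_{μ,H}(h,k)† v_α`, a vector of norm at most `‖f̂²‖_∞`. Bessel's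
inequality for the Hilbert basis bounds `∑ᵢ |⟪v_α, (T bᵢ)(h)⟫|²` by `‖f̂²‖²_∞`; summing over the
`d_μ` vectors `v_α` and integrating over `h` gives the bound.
-/

open MeasureTheory Filter
open scoped ZeroAtInfty InnerProductSpace

theorem MeasureTheory.Lp.norm_sq_eq_integral_norm_sq {X E : Type*} [MeasurableSpace X]
    {μ : Measure X} [NormedAddCommGroup E] (ξ : Lp E 2 μ) :
    ‖ξ‖ ^ 2 = ∫ x, ‖ξ x‖ ^ 2 ∂μ := by
  rw [Lp.norm_def, (Lp.memLp ξ).eLpNorm_eq_integral_rpow_norm two_ne_zero ENNReal.ofNat_ne_top,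
    ENNReal.toReal_ofReal (by positivity)]
  simp only [ENNReal.toReal_ofNat, Real.rpow_two]
  exact Real.rpow_inv_natCast_pow (integral_nonneg fun x => by positivity) two_ne_zero

section KernelOperator

variable {X E F ι : Type*} [MeasurableSpace X] {μ : Measure X} [IsFiniteMeasure μ]

theorem integrable_apply_of_norm_le [NormedAddCommGroup E] [NormedSpace ℂ E]
    [NormedAddCommGroup F] [NormedSpace ℂ F] {A : X → E →L[ℂ] F} {C : ℝ}
    (hA : AEStronglyMeasurable A μ) (hAC : ∀ x, ‖A x‖ ≤ C) (ξ : Lp E 2 μ) : Integrable (fun x => A x (ξ x)) μ :=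
  (((Lp.memLp ξ).integrable one_le_two).norm.const_mul C).mono'
    ((ContinuousLinearMap.id ℂ (E →L[ℂ] F)).aestronglyMeasurable_comp₂ hA
      (Lp.aestronglyMeasurable ξ))
    (ae_of_all _ fun x => (A x).le_of_opNorm_le (hAC x) _)

variable [NormedAddCommGroup E] [InnerProductSpace ℂ E] [CompleteSpace E]
  [NormedAddCommGroup F] [InnerProductSpace ℂ F] [CompleteSpace F] {A : X → E →L[ℂ] F} {C : ℝ}

theorem sum_norm_inner_integral_apply_sq_le (hA : AEStronglyMeasurable A μ)
    (hAC : ∀ x, ‖A x‖ ≤ C) {b : ι → Lp E 2 μ} (hb : Orthonormal ℂ b) (y : F) (S : Finset ι) :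
    ∑ i ∈ S, ‖⟪y, ∫ x, A x (b i x) ∂μ⟫_ℂ‖ ^ 2 ≤ (C * ‖y‖) ^ 2 * μ.real Set.univ := by
  set η : X → E := fun x => ContinuousLinearMap.adjoint (A x) y
  have hη_le : ∀ x, ‖η x‖ ≤ C * ‖y‖ := fun x =>
    (ContinuousLinearMap.adjoint (A x)).le_of_opNorm_le
      ((ContinuousLinearMap.adjoint.norm_map (A x)).trans_le (hAC x)) y
  have hη : MemLp η 2 μ :=
    .of_bound ((ContinuousLinearMap.adjoint.continuous.clm_apply continuous_const
      |>.comp_aestronglyMeasurable hA)) _ (ae_of_all _ hη_le)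
  set Ξ := hη.toLp η
  have h_inner : ∀ i, ⟪y, ∫ x, A x (b i x) ∂μ⟫_ℂ = ⟪Ξ, b i⟫_ℂ := fun i => by
    rw [← integral_inner (integrable_apply_of_norm_le hA hAC (b i)), L2.inner_def]
    refine integral_congr_ae ?_
    filter_upwards [hη.coeFn_toLp] with x hx
    rw [hx, ContinuousLinearMap.adjoint_inner_left]
  have hΞ : ‖Ξ‖ ^ 2 ≤ (C * ‖y‖) ^ 2 * μ.real Set.univ := by
    rw [Lp.norm_sq_eq_integral_norm_sq, mul_comm, ← smul_eq_mul, ← integral_const]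
    refine integral_mono_ae ((Lp.memLp Ξ).integrable_norm_pow two_ne_zero)
      (integrable_const _) ?_
    filter_upwards [hη.coeFn_toLp] with x hx
    rw [hx]
    exact pow_le_pow_left₀ (norm_nonneg _) (hη_le x) 2
  calc ∑ i ∈ S, ‖⟪y, ∫ x, A x (b i x) ∂μ⟫_ℂ‖ ^ 2 = ∑ i ∈ S, ‖⟪b i, Ξ⟫_ℂ‖ ^ 2 := by
        simp only [h_inner, norm_inner_symm]
    _ ≤ ‖Ξ‖ ^ 2 := hb.sum_inner_products_le Ξ
    _ ≤ _ := hΞ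

theorem sum_norm_integral_apply_sq_le [FiniteDimensional ℂ F] (hA : AEStronglyMeasurable A μ)
    (hAC : ∀ x, ‖A x‖ ≤ C) {b : ι → Lp E 2 μ} (hb : Orthonormal ℂ b) (S : Finset ι) :
    ∑ i ∈ S, ‖∫ x, A x (b i x) ∂μ‖ ^ 2 ≤ Module.finrank ℂ F * C ^ 2 * μ.real Set.univ := by
  let v := stdOrthonormalBasis ℂ F
  calc ∑ i ∈ S, ‖∫ x, A x (b i x) ∂μ‖ ^ 2
      = ∑ α, ∑ i ∈ S, ‖⟪v α, ∫ x, A x (b i x) ∂μ⟫_ℂ‖ ^ 2 := by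
        simp_rw [← v.sum_sq_norm_inner_right]; exact Finset.sum_comm
    _ ≤ ∑ α, (C * ‖v α‖) ^ 2 * μ.real Set.univ :=
        Finset.sum_le_sum fun α _ => sum_norm_inner_integral_apply_sq_le hA hAC hb (v α) S
    _ = Module.finrank ℂ F * C ^ 2 * μ.real Set.univ := by
        simp [v.orthonormal.1, mul_assoc]

theorem summable_norm_sq_and_tsum_le_of_ae_eq_integral_kernel [FiniteDimensional ℂ F]
    {g : X → X → E →L[ℂ] F} (hg : ∀ x, AEStronglyMeasurable (g x) μ)
    (hgC : ∀ x y, ‖g x y‖ ≤ C) {T : Lp E 2 μ → Lp F 2 μ}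
    (hT : ∀ ξ, T ξ =ᵐ[μ] fun x => ∫ y, g x y (ξ y) ∂μ) {b : ι → Lp E 2 μ}
    (hb : Orthonormal ℂ b) :
    Summable (fun i => ‖T (b i)‖ ^ 2) ∧
      ∑' i, ‖T (b i)‖ ^ 2 ≤ Module.finrank ℂ F * C ^ 2 * μ.real Set.univ ^ 2 := by
  set c := Module.finrank ℂ F * C ^ 2 * μ.real Set.univ
  have h_sum_le : ∀ S : Finset ι, ∑ i ∈ S, ‖T (b i)‖ ^ 2 ≤ c * μ.real Set.univ := fun S => by
    have h_pt : ∀ᵐ x ∂μ, ∑ i ∈ S, ‖T (b i) x‖ ^ 2 ≤ c := by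
      filter_upwards [(eventually_all_finset S).2 fun i _ => hT (b i)] with x hx
      calc ∑ i ∈ S, ‖T (b i) x‖ ^ 2 = ∑ i ∈ S, ‖∫ y, g x y (b i y) ∂μ‖ ^ 2 :=
            Finset.sum_congr rfl fun i hi => by rw [hx i hi]
        _ ≤ c := sum_norm_integral_apply_sq_le (hg x) (hgC x) hb S
    have h_int : ∀ i, Integrable (fun x => ‖T (b i) x‖ ^ 2) μ := fun i =>
      (Lp.memLp _).integrable_norm_pow two_ne_zero
    calc ∑ i ∈ S, ‖T (b i)‖ ^ 2 = ∫ x, ∑ i ∈ S, ‖T (b i) x‖ ^ 2 ∂μ := by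
          simp_rw [Lp.norm_sq_eq_integral_norm_sq]
          exact (integral_finsetSum S fun i _ => h_int i).symm
      _ ≤ ∫ _, c ∂μ := integral_mono_ae (integrable_finsetSum S fun i _ => h_int i)
          (integrable_const c) h_pt
      _ = c * μ.real Set.univ := by rw [integral_const, smul_eq_mul, mul_comm]
  have h_summable := summable_of_sum_le (fun i => by positivity) h_sum_le
  exact ⟨h_summable, h_summable.tsum_le_of_sum_le fun S => (h_sum_le S).trans_eq (by ring)⟩

end KernelOperator

section MotionGroupKernel

variable {K p V : Type*} [Group K] [TopologicalSpace K] [MeasurableSpace K]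
  [NormedAddCommGroup p] [NormedSpace ℝ p] [NormedAddCommGroup V] [NormedSpace ℂ V]
  (Ad : K →* (p ≃ₗᵢ[ℝ] p)) (H : p) {KH : Subgroup K} (ν : Measure KH)
  (ρ : KH →* (V ≃ₗᵢ[ℂ] V)) (F2 : C₀(K × p, ℂ))

/-- The kernel `f_{μ,H}(h,k)` of `π_{(μ,H)}(f)`, with `F2 = f̂²`. -/
noncomputable def motionGroupKernel (h k : K) : V →L[ℂ] V :=
  ∫ s : KH, F2 (h * ↑s * k⁻¹, Ad h H) • (ρ s).toLinearIsometry.toContinuousLinearMap ∂ν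

theorem norm_motionGroupKernel_le [IsProbabilityMeasure ν] (h k : K) :
    ‖motionGroupKernel Ad H ν ρ F2 h k‖ ≤ ‖F2‖ := by
  refine (norm_integral_le_of_norm_le_const (C := ‖F2‖) (ae_of_all _ fun s => ?_)).trans_eq
    (by simp)
  rw [norm_smul, ← mul_one ‖F2‖]
  exact mul_le_mul (by simpa using F2.toBCF.norm_coe_le_norm _)
    (ρ s).toLinearIsometry.norm_toContinuousLinearMap_le (norm_nonneg _) (norm_nonneg _)

theorem stronglyMeasurable_motionGroupKernel [IsTopologicalGroup K] [BorelSpace K]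
    [CompactSpace K] [CompactSpace KH] [SFinite ν]
    (hρ : Continuous fun s : KH => (ρ s).toLinearIsometry.toContinuousLinearMap) (h : K) :
    StronglyMeasurable (motionGroupKernel Ad H ν ρ F2 h) := by
  have h_cont : Continuous fun q : K × KH =>
      F2 (h * ↑q.2 * q.1⁻¹, Ad h H) • (ρ q.2).toLinearIsometry.toContinuousLinearMap := by
    have := hρ.comp (continuous_snd (X := K))
    fun_prop
  exact (HasCompactSupport.of_compactSpace _).stronglyMeasurable_of_prod h_cont
    |>.integral_prod_right'

end MotionGroupKernel

theorem pi_mu_H_hilbert_schmidt_bound_general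
    {K : Type*} [Group K] [TopologicalSpace K] [IsTopologicalGroup K] [CompactSpace K]
    [MeasurableSpace K] [BorelSpace K]
    -- the normalized Haar measure on `K`
    (μK : Measure K) [IsProbabilityMeasure μK]
    {p : Type*} [NormedAddCommGroup p] [InnerProductSpace ℝ p]
    (Ad : K →* (p ≃ₗᵢ[ℝ] p))
    (H : p)
    (KH : Subgroup K) [CompactSpace KH]
    (ν : Measure KH) [IsProbabilityMeasure ν]
    {V : Type*} [NormedAddCommGroup V] [InnerProductSpace ℂ V] [FiniteDimensional ℂ V]
    (ρ : KH →* (V ≃ₗᵢ[ℂ] V))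
    (hρ : Continuous fun s : KH => (ρ s).toLinearIsometry.toContinuousLinearMap)
    (F2 : C₀(K × p, ℂ))
    -- `T = π_{(μ,H)}(f)` is the integral operator with kernel `f_{μ,H}`
    (T : Lp V 2 μK →L[ℂ] Lp V 2 μK)
    (hT : ∀ ξ : Lp V 2 μK, (T ξ : K → V) =ᵐ[μK] fun h : K =>
      ∫ k : K, (∫ s : KH,
          F2 (h * ↑s * k⁻¹, Ad h H) • (ρ s).toLinearIsometry.toContinuousLinearMap ∂ν)
        (ξ k) ∂μK)
    -- conclusion: `T` is Hilbert–Schmidt, with squared Hilbert–Schmidt norm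
    -- at most `d_μ ‖f̂²‖²`
    {ι : Type*} (b : HilbertBasis ι ℂ (Lp V 2 μK)) :
    Summable (fun i : ι => ‖T (b i)‖ ^ 2) ∧
      ∑' i : ι, ‖T (b i)‖ ^ 2 ≤ (Module.finrank ℂ V : ℝ) * ‖F2‖ ^ 2 := by
  simpa using summable_norm_sq_and_tsum_le_of_ae_eq_integral_kernel
    (fun h => (stronglyMeasurable_motionGroupKernel Ad H ν ρ F2 hρ h).aestronglyMeasurable)
    (norm_motionGroupKernel_le Ad H ν ρ F2) hT b.orthonormal

/-- **`π_{(μ,H)}(f)` is a Hilbert–Schmidt operator, with `‖π_{(μ,H)}(f)‖²_{HS} ≤ d_μ ‖f̂²‖²_∞`.**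

Setting for the Cartan motion group `G₀ = K ⋉ 𝔭` of a Riemannian symmetric pair `(G,K)`:
`K` is a compact group with normalized Haar measure `μK`, acting on the finite-dimensional
real inner product space `p = 𝔭` by the adjoint action `Ad` through linear isometries;
`H` is a nonzero element of the closure of the fixed Weyl chamber `C⁺(𝔞)`, with stabilizer
`KH = K_H = Z_K(H)` carrying its normalized Haar measure `ν`; `ρ = ρ_μ` is an irreducible
unitary representation of `K_H` on the finite-dimensional complex Hilbert space
`V = H_{ρ_μ}` of dimension `d_μ = finrank ℂ V`; and `F2 = f̂² ∈ C₀(K × 𝔭)` is the partial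
Fourier transform in the second variable of `f ∈ C_{0,2}(G₀)`.  The operator
`T = π_{(μ,H)}(f)` on the Hilbert space `H_{(μ,H)} = L²(K, V)` is the integral operator
`(TΨ)(h) = ∫ f_{μ,H}(h,k)(Ψ(k)) dk` with operator–valued kernel
`f_{μ,H}(h,k) = ∫_{K_H} f̂²(h s k⁻¹, Ad(h)H) ρ_μ(s) ds`.

Conclusion: `T = π_{(μ,H)}(f)` is Hilbert–Schmidt and, for every Hilbert basis `b`,
`‖T‖²_{HS} = ∑ᵢ ‖T(bᵢ)‖² ≤ d_μ ‖f̂²‖²_∞`. -/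
theorem pi_mu_H_hilbert_schmidt_bound
    {K : Type*} [Group K] [TopologicalSpace K] [IsTopologicalGroup K] [CompactSpace K]
    [MeasurableSpace K] [BorelSpace K]
    -- the normalized Haar measure on `K`
    (μK : Measure K) [μK.IsHaarMeasure] [IsProbabilityMeasure μK]
    {p : Type*} [NormedAddCommGroup p] [InnerProductSpace ℝ p] [FiniteDimensional ℝ p]
    (Ad : K →* (p ≃ₗᵢ[ℝ] p))
    (chamber : Set p) (H : p) (hH : H ∈ closure chamber) (hH0 : H ≠ 0)
    (KH : Subgroup K) [CompactSpace KH]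
    (hKH : ∀ g : K, g ∈ KH ↔ Ad g H = H)
    (ν : Measure KH) [ν.IsHaarMeasure] [IsProbabilityMeasure ν]
    {V : Type*} [NormedAddCommGroup V] [InnerProductSpace ℂ V] [FiniteDimensional ℂ V]
    (ρ : KH →* (V ≃ₗᵢ[ℂ] V))
    (hρ : Continuous fun s : KH => (ρ s).toLinearIsometry.toContinuousLinearMap)
    (hirr : ∀ U : Submodule ℂ V,
      (∀ s : KH, U.map ((ρ s).toLinearEquiv : V →ₗ[ℂ] V) ≤ U) → U = ⊥ ∨ U = ⊤)
    (F2 : C₀(K × p, ℂ))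
    -- `T = π_{(μ,H)}(f)` is the integral operator with kernel `f_{μ,H}`
    (T : Lp V 2 μK →L[ℂ] Lp V 2 μK)
    (hT : ∀ ξ : Lp V 2 μK, (T ξ : K → V) =ᵐ[μK] fun h : K =>
      ∫ k : K, (∫ s : KH,
          F2 (h * ↑s * k⁻¹, Ad h H) • (ρ s).toLinearIsometry.toContinuousLinearMap ∂ν)
        (ξ k) ∂μK)
    -- conclusion: `T` is Hilbert–Schmidt, with squared Hilbert–Schmidt norm
    -- at most `d_μ ‖f̂²‖²`
    {ι : Type*} (b : HilbertBasis ι ℂ (Lp V 2 μK)) :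
    Summable (fun i : ι => ‖T (b i)‖ ^ 2) ∧
      ∑' i : ι, ‖T (b i)‖ ^ 2 ≤ (Module.finrank ℂ V : ℝ) * ‖F2‖ ^ 2 :=
  pi_mu_H_hilbert_schmidt_bound_general μK Ad H KH ν ρ hρ F2 T hT b
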